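/- arXiv:1408.1387 — 7 statements merged into one kernel-verified Lean document; each statement's English description precedes it below -/
import Mathlib

section
/- Let T ∈ (0,1) and G ≥ 1. Suppose f : {-1,0,1}^G → ℝ is nonnegative, satisfies f(y) = 0 whenever y ≠ 0 and every nonzero coordinate of y equals -1 (no-free-lunch), and satisfies for every index i and every fixed choice of the other coordinates: T·f(...,1,...) + (1-T)·f(...,-1,...) = f(...,0,...). Then f(y) = 0 for every y having at least one coordinate equal to -1. -/
/-!
Induct on the number of correct answers. If there are none, every answered question is
incorrect and no-free-lunch gives `f y = 0`. Otherwise pick a correct coordinate `i`: moving it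
to `0` or to `-1` keeps the incorrect answer and removes a correct one, so by induction both
values vanish, and the identity at `i` collapses to `T * f y = 0`.
-/

open Finset Function

variable {ι : Type*}

/-- Entries in `{-1, 0, 1}`: incorrect, skipped, correct. -/
def IsEvaluation (y : ι → ℤ) : Prop := ∀ j, y j = -1 ∨ y j = 0 ∨ y j = 1

lemma IsEvaluation.eq_neg_one_of_ne_zero {y : ι → ℤ} (hy : IsEvaluation y)
    (hone : ∀ j, y j ≠ 1) {j : ι} (hj : y j ≠ 0) : y j = -1 := by
  rcases hy j with h | h | h
  exacts [h, absurd h hj, absurd h (hone j)]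

variable [DecidableEq ι]

lemma IsEvaluation.update {y : ι → ℤ} (hy : IsEvaluation y) (i : ι) {c : ℤ}
    (hc : c = -1 ∨ c = 0 ∨ c = 1) : IsEvaluation (update y i c) := by
  intro k
  rcases eq_or_ne k i with rfl | hk
  · simpa using hc
  · simpa [update_of_ne hk] using hy k

variable [Fintype ι]

def correctAnswers (y : ι → ℤ) : Finset ι := univ.filter (y · = 1)

lemma correctAnswers_update_ssubset {y : ι → ℤ} {i : ι} (hi : y i = 1) {c : ℤ} (hc : c ≠ 1) :
    correctAnswers (update y i c) ⊂ correctAnswers y := by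
  rw [Finset.ssubset_iff_of_subset]
  · exact ⟨i, by simp [correctAnswers, hi], by simp [correctAnswers, hc]⟩
  · intro k
    rcases eq_or_ne k i with rfl | hk
    · simp [correctAnswers, hc]
    · simp [correctAnswers, update_of_ne hk]

variable {R : Type*} [Ring R] [NoZeroDivisors R]

theorem eq_zero_of_exists_eq_neg_one {T : R} (hT : T ≠ 0) {f : (ι → ℤ) → R}
    (hnfl : ∀ y : ι → ℤ, IsEvaluation y → (∃ j, y j ≠ 0) → (∀ j, y j ≠ 0 → y j = -1) → f y = 0)
    (hid : ∀ y : ι → ℤ, IsEvaluation y → ∀ i,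
      T * f (update y i 1) + (1 - T) * f (update y i (-1)) = f (update y i 0))
    (y : ι → ℤ) (hy : IsEvaluation y) (hneg : ∃ j, y j = -1) : f y = 0 := by
  induction hn : #(correctAnswers y) using Nat.strong_induction_on generalizing y with
  | _ n ih =>
  by_cases hone : ∃ i, y i = 1
  · obtain ⟨i, hi⟩ := hone
    obtain ⟨j, hj⟩ := hneg
    have hij : j ≠ i := by rintro rfl; simp [hi] at hj
    have hupdate : ∀ c : ℤ, c = -1 ∨ c = 0 → f (update y i c) = 0 := by
      intro c hc
      have hc1 : c ≠ 1 := by rcases hc with rfl | rfl <;> decide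
      refine ih _ ?_ _ (hy.update i (by tauto)) ⟨j, by simp [update_of_ne hij, hj]⟩ rfl
      exact hn ▸ card_lt_card (correctAnswers_update_ssubset hi hc1)
    have key := hid y hy i
    rw [hupdate 0 (by simp), hupdate (-1) (by simp), ← hi, update_eq_self] at key
    simpa [hT] using key
  · push Not at hone
    obtain ⟨j, hj⟩ := hneg
    exact hnfl y hy ⟨j, by simp [hj]⟩ fun k => hy.eq_neg_one_of_ne_zero hone

theorem zero_payment_of_incorrect_general
    (G : ℕ) (T : ℝ) (hT0 : 0 < T)
    (f : (Fin G → ℤ) → ℝ)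
    (hnfl : ∀ y : Fin G → ℤ, (∀ j, y j = -1 ∨ y j = 0 ∨ y j = 1) →
        (∃ j, y j ≠ 0) → (∀ j, y j ≠ 0 → y j = -1) → f y = 0)
    (hid : ∀ y : Fin G → ℤ, (∀ j, y j = -1 ∨ y j = 0 ∨ y j = 1) → ∀ i,
        T * f (Function.update y i 1) + (1 - T) * f (Function.update y i (-1))
          = f (Function.update y i 0)) :
    ∀ y : Fin G → ℤ, (∀ j, y j = -1 ∨ y j = 0 ∨ y j = 1) → (∃ j, y j = -1) → f y = 0 :=
  eq_zero_of_exists_eq_neg_one hT0.ne' hnfl hid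

/-- nonnegativity, no-free-lunch and the coordinatewise incentive identity force
zero payment whenever at least one answer is incorrect. -/
theorem zero_payment_of_incorrect
    (G : ℕ) (hG : 1 ≤ G) (T : ℝ) (hT0 : 0 < T) (hT1 : T < 1)
    (f : (Fin G → ℤ) → ℝ)
    (hnonneg : ∀ y : Fin G → ℤ, (∀ j, y j = -1 ∨ y j = 0 ∨ y j = 1) → 0 ≤ f y)
    (hnfl : ∀ y : Fin G → ℤ, (∀ j, y j = -1 ∨ y j = 0 ∨ y j = 1) →
        (∃ j, y j ≠ 0) → (∀ j, y j ≠ 0 → y j = -1) → f y = 0)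
    (hid : ∀ y : Fin G → ℤ, (∀ j, y j = -1 ∨ y j = 0 ∨ y j = 1) → ∀ i,
        T * f (Function.update y i 1) + (1 - T) * f (Function.update y i (-1))
          = f (Function.update y i 0)) :
    ∀ y : Fin G → ℤ, (∀ j, y j = -1 ∨ y j = 0 ∨ y j = 1) → (∃ j, y j = -1) → f y = 0 :=
  zero_payment_of_incorrect_general G T hT0 f hnfl hid
end

section
/- Let T ∈ (0,1), G ≥ 1, μ_max > 0. Suppose f : {-1,0,1}^G → ℝ is nonnegative with maximum value μ_max, satisfies the no-free-lunch condition, and satisfies for every index i and every fixed choice of the other coordinates: T·f(...,1,...) + (1-T)·f(...,-1,...) = f(...,0,...). Then f(y_1,...,y_G) = μ_max · T^G · ∏_{i=1}^G α_{y_i}, where α_{-1} = 0, α_0 = 1, α_1 = 1/T. -/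
/-!
If some coordinate is `-1` then `f` vanishes. This goes by induction on the set of coordinates
equal to `1`, starting from no-free-lunch: lowering one such coordinate to `0` gives a vector of
value `0` by induction, and the identity writes that `0` as a combination of two nonnegative
values with positive weight `T` on the original one. On `{0, 1}`-vectors the identity then reads
`f y = T * f y'`, where `y'` raises one zero of `y` to a one, so `f y = T ^ #zeros * f 1`, and
comparing with a maximiser gives `f 1 = μ_max`.
-/

open Function Finset

namespace SkipMechanism

variable {ι : Type*} [DecidableEq ι] {T : ℝ} {f : (ι → ℤ) → ℝ}

def IsTernary (y : ι → ℤ) : Prop := ∀ j, y j = -1 ∨ y j = 0 ∨ y j = 1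

def NoFreeLunch (f : (ι → ℤ) → ℝ) : Prop :=
  ∀ y, IsTernary y → (∃ j, y j ≠ 0) → (∀ j, y j ≠ 0 → y j = -1) → f y = 0

def CoordinatewiseIdentity (T : ℝ) (f : (ι → ℤ) → ℝ) : Prop :=
  ∀ y, IsTernary y → ∀ i,
    T * f (update y i 1) + (1 - T) * f (update y i (-1)) = f (update y i 0)

/-- The factor `α_a` of the multiplicative mechanism. -/
noncomputable def weight (T : ℝ) (a : ℤ) : ℝ := if a = 1 then 1 / T else if a = 0 then 1 else 0

def zeroOn (s : Finset ι) : ι → ℤ := fun j => if j ∈ s then 0 else 1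

lemma IsTernary.update {y : ι → ℤ} (hy : IsTernary y) (i : ι) {a : ℤ}
    (ha : a = -1 ∨ a = 0 ∨ a = 1) : IsTernary (update y i a) := by
  intro j
  by_cases hj : j = i
  · subst hj; simpa using ha
  · simpa [update_of_ne hj] using hy j

lemma zeroOn_empty : zeroOn (∅ : Finset ι) = 1 := by
  funext j
  simp [zeroOn]

lemma isTernary_zeroOn (s : Finset ι) : IsTernary (zeroOn s) := by
  intro j
  by_cases hj : j ∈ s <;> simp [zeroOn, hj]

lemma IsTernary.eq_zeroOn [Fintype ι] {y : ι → ℤ} (hy : IsTernary y) (hneg : ∀ i, y i ≠ -1) :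
    y = zeroOn (univ.filter (y · = 0)) := by
  funext j
  rcases hy j with h | h | h
  · exact absurd h (hneg j)
  all_goals simp [zeroOn, h]

lemma pow_card_mul_prod_weight_zeroOn [Fintype ι] (hT : T ≠ 0) (s : Finset ι) :
    T ^ Fintype.card ι * ∏ i, weight T (zeroOn s i) = T ^ s.card := by
  have hfactor : ∀ i, T * weight T (zeroOn s i) = if i ∈ s then T else 1 := by
    intro i
    by_cases hi : i ∈ s <;> simp [weight, zeroOn, hi, hT]
  rw [← card_univ, ← prod_const, ← prod_mul_distrib, prod_congr rfl fun i _ => hfactor i,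
    prod_ite_mem, univ_inter, prod_const]

theorem eq_zero_of_exists_eq_neg_one [Fintype ι] (hT0 : 0 < T) (hT1 : T ≤ 1)
    (hnonneg : ∀ y, IsTernary y → 0 ≤ f y) (hnfl : NoFreeLunch f)
    (hid : CoordinatewiseIdentity T f) {y : ι → ℤ} (hy : IsTernary y)
    (hneg : ∃ i, y i = -1) : f y = 0 := by
  suffices ∀ s : Finset ι, ∀ y, IsTernary y → (∃ i, y i = -1) → (∀ j, y j = 1 → j ∈ s) →
      f y = 0 from this univ y hy hneg fun j _ => mem_univ j
  intro s
  induction s using Finset.induction_on with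
  | empty =>
    intro y hy ⟨i, hi⟩ hones
    refine hnfl y hy ⟨i, by omega⟩ fun j hj => ?_
    rcases hy j with h | h | h
    · exact h
    · exact absurd h hj
    · exact absurd (hones j h) (notMem_empty j)
  | insert a s _ ih =>
    intro y hy ⟨i, hi⟩ hones
    by_cases hya : y a = 1
    · have hia : i ≠ a := by rintro rfl; omega
      have hraised : f (update y a 0) = 0 := by
        refine ih _ (hy.update a (by omega)) ⟨i, by simpa [update_of_ne hia]⟩ fun j hj => ?_
        have hja : j ≠ a := by rintro rfl; simp at hj
        rw [update_of_ne hja] at hj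
        exact (mem_insert.1 (hones j hj)).resolve_left hja
      have hcomb := hid y hy a
      rw [← hya, update_eq_self, hya, hraised] at hcomb
      have hlowered := hnonneg _ (hy.update a (a := -1) (by omega))
      nlinarith [hnonneg y hy]
    · refine ih y hy ⟨i, hi⟩ fun j hj => (mem_insert.1 (hones j hj)).resolve_left ?_
      rintro rfl
      exact hya hj

theorem apply_zeroOn (hid : CoordinatewiseIdentity T f)
    (hvanish : ∀ y, IsTernary y → (∃ i, y i = -1) → f y = 0) (s : Finset ι) :
    f (zeroOn s) = T ^ s.card * f 1 := by
  induction s using Finset.induction_on with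
  | empty => rw [zeroOn_empty, card_empty, pow_zero, one_mul]
  | insert a s ha ih =>
    have hcomb := hid _ (isTernary_zeroOn (insert a s)) a
    have hraise : update (zeroOn (insert a s)) a 1 = zeroOn s := by
      funext j
      by_cases hj : j = a
      · subst hj; simp [zeroOn, ha]
      · simp [zeroOn, hj]
    have hlower : f (update (zeroOn (insert a s)) a (-1)) = 0 :=
      hvanish _ ((isTernary_zeroOn _).update a (by omega)) ⟨a, update_self _ _ _⟩
    have hkeep : update (zeroOn (insert a s)) a 0 = zeroOn (insert a s) :=
      update_eq_self_iff.2 (by simp [zeroOn])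
    rw [hraise, hlower, hkeep, ih] at hcomb
    rw [← hcomb, card_insert_of_notMem ha]
    ring

theorem apply_one_eq [Fintype ι] {μ : ℝ} (hT0 : 0 ≤ T) (hT1 : T ≤ 1)
    (hnonneg : ∀ y, IsTernary y → 0 ≤ f y) (hbound : ∀ y, IsTernary y → f y ≤ μ)
    (hattain : ∃ y, IsTernary y ∧ f y = μ) (hid : CoordinatewiseIdentity T f)
    (hvanish : ∀ y, IsTernary y → (∃ i, y i = -1) → f y = 0) : f 1 = μ := by
  have hone : IsTernary (1 : ι → ℤ) := fun _ => Or.inr (Or.inr rfl)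
  obtain ⟨y, hy, rfl⟩ := hattain
  refine le_antisymm (hbound 1 hone) ?_
  by_cases hneg : ∃ i, y i = -1
  · rw [hvanish y hy hneg]
    exact hnonneg 1 hone
  · push Not at hneg
    rw [hy.eq_zeroOn hneg, apply_zeroOn hid hvanish]
    exact mul_le_of_le_one_left (hnonneg 1 hone) (pow_le_one₀ hT0 hT1)

end SkipMechanism

open SkipMechanism

theorem skip_mechanism_unique_general
    (G : ℕ) (T μmax : ℝ) (hT0 : 0 < T) (hT1 : T < 1)
    (f : (Fin G → ℤ) → ℝ)
    (hnonneg : ∀ y : Fin G → ℤ, (∀ j, y j = -1 ∨ y j = 0 ∨ y j = 1) → 0 ≤ f y)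
    (hbound : ∀ y : Fin G → ℤ, (∀ j, y j = -1 ∨ y j = 0 ∨ y j = 1) → f y ≤ μmax)
    (hattain : ∃ y : Fin G → ℤ, (∀ j, y j = -1 ∨ y j = 0 ∨ y j = 1) ∧ f y = μmax)
    (hnfl : ∀ y : Fin G → ℤ, (∀ j, y j = -1 ∨ y j = 0 ∨ y j = 1) →
        (∃ j, y j ≠ 0) → (∀ j, y j ≠ 0 → y j = -1) → f y = 0)
    (hid : ∀ y : Fin G → ℤ, (∀ j, y j = -1 ∨ y j = 0 ∨ y j = 1) → ∀ i,
        T * f (Function.update y i 1) + (1 - T) * f (Function.update y i (-1))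
          = f (Function.update y i 0)) :
    ∀ y : Fin G → ℤ, (∀ j, y j = -1 ∨ y j = 0 ∨ y j = 1) →
      f y = μmax * T ^ G *
        ∏ i, (if y i = 1 then 1 / T else if y i = 0 then (1 : ℝ) else 0) := by
  have hvanish : ∀ y, IsTernary y → (∃ i, y i = -1) → f y = 0 := fun y hy hneg =>
    eq_zero_of_exists_eq_neg_one hT0 hT1.le hnonneg hnfl hid hy hneg
  have hone : f 1 = μmax := apply_one_eq hT0.le hT1.le hnonneg hbound hattain hid hvanish
  intro y hy
  by_cases hneg : ∃ i, y i = -1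
  · obtain ⟨i, hi⟩ := hneg
    rw [hvanish y hy ⟨i, hi⟩, prod_eq_zero (mem_univ i) (by simp [hi]), mul_zero]
  · push Not at hneg
    have hprod := pow_card_mul_prod_weight_zeroOn hT0.ne' (univ.filter (y · = 0))
    rw [Fintype.card_fin] at hprod
    unfold weight at hprod
    rw [IsTernary.eq_zeroOn hy hneg, apply_zeroOn hid hvanish, hone, mul_assoc, hprod, mul_comm]

/-- Theorem 2, uniqueness: any nonnegative mechanism with maximum value μ_max
satisfying no-free-lunch and the coordinatewise identity is the multiplicative mechanism. -/
theorem skip_mechanism_unique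
    (G : ℕ) (hG : 1 ≤ G) (T μmax : ℝ) (hT0 : 0 < T) (hT1 : T < 1) (hμ : 0 < μmax)
    (f : (Fin G → ℤ) → ℝ)
    (hnonneg : ∀ y : Fin G → ℤ, (∀ j, y j = -1 ∨ y j = 0 ∨ y j = 1) → 0 ≤ f y)
    (hbound : ∀ y : Fin G → ℤ, (∀ j, y j = -1 ∨ y j = 0 ∨ y j = 1) → f y ≤ μmax)
    (hattain : ∃ y : Fin G → ℤ, (∀ j, y j = -1 ∨ y j = 0 ∨ y j = 1) ∧ f y = μmax)
    (hnfl : ∀ y : Fin G → ℤ, (∀ j, y j = -1 ∨ y j = 0 ∨ y j = 1) →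
        (∃ j, y j ≠ 0) → (∀ j, y j ≠ 0 → y j = -1) → f y = 0)
    (hid : ∀ y : Fin G → ℤ, (∀ j, y j = -1 ∨ y j = 0 ∨ y j = 1) → ∀ i,
        T * f (Function.update y i 1) + (1 - T) * f (Function.update y i (-1))
          = f (Function.update y i 0)) :
    ∀ y : Fin G → ℤ, (∀ j, y j = -1 ∨ y j = 0 ∨ y j = 1) →
      f y = μmax * T ^ G *
        ∏ i, (if y i = 1 then 1 / T else if y i = 0 then (1 : ℝ) else 0) :=
  skip_mechanism_unique_general G T μmax hT0 hT1 f hnonneg hbound hattain hnfl hid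
end

section
/- Let T ∈ (0,1), G = N ≥ 1, and define the expected payment of a worker who answers the set A ⊆ {1,...,N} of questions (choosing her most likely answer for each) under the mechanism f(y) = μ_max T^G ∏ α_{y_i} (α_{-1}=0, α_0=1, α_1=1/T) as E(A) = μ_max T^G ∏_{i∈A} (p_i/T), where p_i ∈ (0,1] is her confidence for question i. If the p_i satisfy p_i ≠ T for all i, then E(A) is uniquely maximized at A* = {i : p_i > T}. -/
/-!
Writing `q i = p i / T`, the payment is a positive constant times `∏ i ∈ A, q i`, and
`p i ≠ T` means every factor is either `< 1` or `> 1`. Passing from `A` to `A ∩ A*` removes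
factors `< 1`, and passing from `A ∩ A*` to `A*` adds factors `> 1`; unless `A = A*`, one of
the two steps changes the set and so strictly increases the product.
-/

namespace Finset

section StrictOrderedSemiring

variable {ι R : Type*} [CommSemiring R] [PartialOrder R] [IsStrictOrderedRing R]
  {f : ι → R} {s t : Finset ι}

theorem prod_lt_prod_of_ssubset_of_one_lt (h : s ⊂ t) (hf0 : ∀ i ∈ s, 0 < f i)
    (hf : ∀ i ∈ t, i ∉ s → 1 < f i) : ∏ i ∈ s, f i < ∏ i ∈ t, f i := by
  classical
  have hsdiff : 1 < ∏ i ∈ t \ s, f i := by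
    simpa using prod_lt_prod_of_nonempty (fun _ _ ↦ zero_lt_one)
      (fun i hi ↦ hf i (mem_sdiff.mp hi).1 (mem_sdiff.mp hi).2) (sdiff_nonempty.mpr h.2)
  calc ∏ i ∈ s, f i < (∏ i ∈ t \ s, f i) * ∏ i ∈ s, f i :=
        lt_mul_of_one_lt_left (prod_pos hf0) hsdiff
    _ = ∏ i ∈ t, f i := prod_sdiff h.1

theorem prod_lt_prod_of_ssubset_of_lt_one (h : s ⊂ t) (hf0 : ∀ i ∈ t, 0 < f i)
    (hf : ∀ i ∈ t, i ∉ s → f i < 1) : ∏ i ∈ t, f i < ∏ i ∈ s, f i := by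
  classical
  have hsdiff : ∏ i ∈ t \ s, f i < 1 := by
    simpa using prod_lt_prod_of_nonempty (fun i hi ↦ hf0 i (mem_sdiff.mp hi).1)
      (fun i hi ↦ hf i (mem_sdiff.mp hi).1 (mem_sdiff.mp hi).2) (sdiff_nonempty.mpr h.2)
  calc ∏ i ∈ t, f i = (∏ i ∈ t \ s, f i) * ∏ i ∈ s, f i := (prod_sdiff h.1).symm
    _ < ∏ i ∈ s, f i := mul_lt_of_lt_one_left (prod_pos fun i hi ↦ hf0 i (h.1 hi)) hsdiff

end StrictOrderedSemiring

theorem prod_lt_prod_filter_one_lt {ι R : Type*} [Fintype ι] [DecidableEq ι] [CommSemiring R]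
    [LinearOrder R] [IsStrictOrderedRing R] {f : ι → R} [DecidablePred (1 < f ·)]
    {s : Finset ι}
    (hf0 : ∀ i, 0 < f i) (hf1 : ∀ i, f i ≠ 1) (hs : s ≠ univ.filter (1 < f ·)) :
    ∏ i ∈ s, f i < ∏ i ∈ univ.filter (1 < f ·), f i := by
  set S := univ.filter (1 < f ·)
  have hlt_one : ∀ i ∈ s, i ∉ s ∩ S → f i < 1 := fun i hi hiS ↦
    (hf1 i).lt_of_le (not_lt.mp fun h ↦ hiS (mem_inter.mpr ⟨hi, (mem_filter_univ i).mpr h⟩))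
  have hone_lt : ∀ i ∈ S, i ∉ s → 1 < f i := fun i hi _ ↦ (mem_filter_univ i).mp hi
  by_cases hsS : s ∩ S = s
  · have hsub : s ⊂ S := ssubset_of_subset_of_ne (inter_eq_left.mp hsS) hs
    exact prod_lt_prod_of_ssubset_of_one_lt hsub (fun i _ ↦ hf0 i) hone_lt
  · calc ∏ i ∈ s, f i < ∏ i ∈ s ∩ S, f i :=
          prod_lt_prod_of_ssubset_of_lt_one (ssubset_of_subset_of_ne inter_subset_left hsS)
            (fun i _ ↦ hf0 i) hlt_one
      _ ≤ ∏ i ∈ S, f i := prod_le_prod_of_subset_of_one_le inter_subset_right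
          (fun i _ ↦ (hf0 i).le) (fun i hi _ ↦ ((mem_filter_univ i).mp hi).le)

end Finset

theorem skip_incentive_compatible_general
    (N : ℕ) (T μmax : ℝ) (hT0 : 0 < T) (hμ : 0 < μmax)
    (p : Fin N → ℝ) (hp0 : ∀ i, 0 < p i) (hpT : ∀ i, p i ≠ T)
    (E : Finset (Fin N) → ℝ)
    (hE : ∀ A : Finset (Fin N), E A = μmax * T ^ N * ∏ i ∈ A, p i / T) :
    ∀ A : Finset (Fin N), A ≠ Finset.univ.filter (fun i => T < p i) →
      E A < E (Finset.univ.filter (fun i => T < p i)) := by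
  intro A hA
  have hA_star : Finset.univ.filter (fun i => T < p i) = Finset.univ.filter (1 < p · / T) := by
    simp only [one_lt_div hT0]
  rw [hA_star] at hA ⊢
  rw [hE, hE]
  refine mul_lt_mul_of_pos_left ?_ (by positivity)
  exact Finset.prod_lt_prod_filter_one_lt (fun i ↦ div_pos (hp0 i) hT0)
    (fun i ↦ mt (div_eq_one_iff_eq hT0.ne').mp (hpT i)) hA

/-- Theorem 1, G = N: the expected payment E(A) = μ_max T^G ∏_{i∈A}(p_i/T)
is uniquely maximized at the set of questions with confidence above T. -/
theorem skip_incentive_compatible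
    (N : ℕ) (hN : 1 ≤ N) (T μmax : ℝ) (hT0 : 0 < T) (hT1 : T < 1) (hμ : 0 < μmax)
    (p : Fin N → ℝ) (hp0 : ∀ i, 0 < p i) (hp1 : ∀ i, p i ≤ 1) (hpT : ∀ i, p i ≠ T)
    (E : Finset (Fin N) → ℝ)
    (hE : ∀ A : Finset (Fin N), E A = μmax * T ^ N * ∏ i ∈ A, p i / T) :
    ∀ A : Finset (Fin N), A ≠ Finset.univ.filter (fun i => T < p i) →
      E A < E (Finset.univ.filter (fun i => T < p i)) :=
  skip_incentive_compatible_general N T μmax hT0 hμ p hp0 hpT E hE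
end

section
/- Let 0 < S_1 < ... < S_L < 1 and 0 < T_1 < ... < T_L < 1 with T_1 = S_1 and T_l > S_l for l ≥ 2. Define α_L = 1/S_L, α_{-L} = 0, and recursively for l = L−1 down to 1: α_l = [(1−S_l)T_{l+1}α_{l+1} + (1−S_l)(1−T_{l+1})α_{-(l+1)} − (1−T_{l+1})] / (T_{l+1} − S_l) and α_{-l} = (1 − S_l α_l)/(1 − S_l); set α_0 = 1. Then for every l ∈ {1,...,L}: S_l·α_l + (1−S_l)·α_{-l} = 1, and for every l ∈ {0,...,L−1}: T_{l+1}·α_{l+1} + (1−T_{l+1})·α_{-(l+1)} = T_{l+1}·α_l + (1−T_{l+1})·α_{-l}. -/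
/-- The pair (α_{L−k}, α_{−(L−k)}) of constants of Algorithm 2, computed by downward
recursion from level L. -/
noncomputable def alphaPair (L : ℕ) (S T : ℕ → ℝ) : ℕ → ℝ × ℝ
  | 0 => (1 / S L, 0)
  | k + 1 =>
      let p := alphaPair L S T k
      let l := L - (k + 1)
      let a := ((1 - S l) * T (l + 1) * p.1 + (1 - S l) * (1 - T (l + 1)) * p.2
                  - (1 - T (l + 1))) / (T (l + 1) - S l)
      (a, (1 - S l * a) / (1 - S l))

/-- The constants α_z, z ∈ {−L,…,L}, of Algorithm 2 (α_0 = 1). -/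
noncomputable def alphaC (L : ℕ) (S T : ℕ → ℝ) (z : ℤ) : ℝ :=
  if z = 0 then 1
  else if 0 < z then (alphaPair L S T (L - z.toNat)).1
  else (alphaPair L S T (L - (-z).toNat)).2

/-!
The constant α_{-l} is defined precisely so that the skip equation at level `l` holds, and α_l
is the solution of the level equation between `l` and `l + 1` once α_{-l} is eliminated through
that skip equation. At the top level α_L = 1/S_L, α_{-L} = 0, and the level equation between
0 and 1 is the skip equation at level 1 because T_1 = S_1 and α_0 = α_{-0} = 1. The ordering of
the thresholds keeps the denominators S_L, 1 - S_l and T_{l+1} - S_l nonzero.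
-/

section Balance

variable {K : Type*} [Field K] {s t a b a' b' : K}

theorem skip_balance_of_eq_div (hs : s ≠ 1) (hb : b = (1 - s * a) / (1 - s)) :
    s * a + (1 - s) * b = 1 := by
  have : 1 - s ≠ 0 := sub_ne_zero.mpr hs.symm
  rw [hb]
  field_simp
  ring

theorem level_balance_of_eq_div (hs : s ≠ 1) (hts : t ≠ s)
    (ha : a = ((1 - s) * t * a' + (1 - s) * (1 - t) * b' - (1 - t)) / (t - s))
    (hb : b = (1 - s * a) / (1 - s)) :
    t * a' + (1 - t) * b' = t * a + (1 - t) * b := by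
  have h1s : 1 - s ≠ 0 := sub_ne_zero.mpr hs.symm
  have hts' : t - s ≠ 0 := sub_ne_zero.mpr hts
  rw [hb, ha]
  field_simp
  ring

end Balance

section Alpha

variable {L l : ℕ} {S T : ℕ → ℝ}

theorem alphaPair_sub_of_lt (h : l < L) :
    alphaPair L S T (L - l) =
      let p := alphaPair L S T (L - (l + 1))
      let a := ((1 - S l) * T (l + 1) * p.1 + (1 - S l) * (1 - T (l + 1)) * p.2
                  - (1 - T (l + 1))) / (T (l + 1) - S l)
      (a, (1 - S l * a) / (1 - S l)) := by
  obtain ⟨k, hk⟩ : ∃ k, L - l = k + 1 := ⟨L - (l + 1), by omega⟩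
  have hl : L - (k + 1) = l := by omega
  have hk' : L - (l + 1) = k := by omega
  rw [hk, alphaPair, hl, hk']

@[simp]
theorem alphaC_zero : alphaC L S T 0 = 1 := if_pos rfl

theorem alphaC_natCast (hl : l ≠ 0) : alphaC L S T l = (alphaPair L S T (L - l)).1 := by
  simp [alphaC, hl, Nat.pos_of_ne_zero hl]

theorem alphaC_neg_natCast (hl : l ≠ 0) :
    alphaC L S T (-(l : ℤ)) = (alphaPair L S T (L - l)).2 := by
  simp [alphaC, hl]

theorem alphaC_skip_balance (hl : l ≠ 0) (hlL : l ≤ L) (hSL : S L ≠ 0)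
    (hS : l < L → S l ≠ 1) :
    S l * alphaC L S T l + (1 - S l) * alphaC L S T (-(l : ℤ)) = 1 := by
  rw [alphaC_natCast hl, alphaC_neg_natCast hl]
  rcases hlL.lt_or_eq with hlt | rfl
  · rw [alphaPair_sub_of_lt hlt]
    exact skip_balance_of_eq_div (hS hlt) rfl
  · simp [alphaPair, hSL]

theorem alphaC_level_balance (hl : l ≠ 0) (hlL : l < L) (hS : S l ≠ 1)
    (hTS : T (l + 1) ≠ S l) :
    T (l + 1) * alphaC L S T ((l : ℤ) + 1) + (1 - T (l + 1)) * alphaC L S T (-((l : ℤ) + 1))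
      = T (l + 1) * alphaC L S T l + (1 - T (l + 1)) * alphaC L S T (-(l : ℤ)) := by
  have hcast : (l : ℤ) + 1 = ((l + 1 : ℕ) : ℤ) := by push_cast; rfl
  rw [hcast, alphaC_natCast hl, alphaC_neg_natCast hl, alphaC_natCast l.succ_ne_zero,
    alphaC_neg_natCast l.succ_ne_zero, alphaPair_sub_of_lt hlL]
  exact level_balance_of_eq_div hS hTS rfl rfl

end Alpha

theorem alpha_balance_equations_general
    (L : ℕ) (S T : ℕ → ℝ)
    (hS0 : 0 < S 1) (hSmono : ∀ l : ℕ, 1 ≤ l → l < L → S l < S (l + 1)) (hSL : S L < 1)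
    (hTS1 : T 1 = S 1) (hTS : ∀ l : ℕ, 2 ≤ l → l ≤ L → S l < T l) :
    (∀ l : ℕ, 1 ≤ l → l ≤ L →
      S l * alphaC L S T l + (1 - S l) * alphaC L S T (-(l : ℤ)) = 1) ∧
    (∀ l : ℕ, l < L →
      T (l + 1) * alphaC L S T ((l : ℤ) + 1)
        + (1 - T (l + 1)) * alphaC L S T (-((l : ℤ) + 1))
      = T (l + 1) * alphaC L S T l + (1 - T (l + 1)) * alphaC L S T (-(l : ℤ))) := by
  have hS_strictMonoOn : StrictMonoOn S (Set.Icc 1 L) :=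
    strictMonoOn_of_lt_add_one Set.ordConnected_Icc fun l _ hl hl1 => hSmono l hl.1 hl1.2
  have hS_pos (l : ℕ) (hl : 1 ≤ l) (hlL : l ≤ L) : 0 < S l :=
    hS0.trans_le <| hS_strictMonoOn.monotoneOn ⟨le_rfl, hl.trans hlL⟩ ⟨hl, hlL⟩ hl
  have hS_lt_one (l : ℕ) (hl : 1 ≤ l) (hlL : l ≤ L) : S l < 1 :=
    (hS_strictMonoOn.monotoneOn ⟨hl, hlL⟩ ⟨hl.trans hlL, le_rfl⟩ hlL).trans_lt hSL
  have skip (l : ℕ) (hl : 1 ≤ l) (hlL : l ≤ L) :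
      S l * alphaC L S T l + (1 - S l) * alphaC L S T (-(l : ℤ)) = 1 :=
    alphaC_skip_balance (Nat.one_le_iff_ne_zero.mp hl) hlL (hS_pos L (hl.trans hlL) le_rfl).ne'
      fun _ => (hS_lt_one l hl hlL).ne
  refine ⟨skip, fun l hlL => ?_⟩
  rcases Nat.eq_zero_or_pos l with rfl | hl
  · simpa [hTS1] using skip 1 le_rfl hlL
  · refine alphaC_level_balance hl.ne' hlL (hS_lt_one l hl hlL.le).ne (ne_of_gt ?_)
    calc S l < S (l + 1) := hSmono l hl hlL
      _ < T (l + 1) := hTS (l + 1) (by omega) hlL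

/-- Lemma 3: the constants of Algorithm 2 satisfy the skip-indifference and
level-indifference balance equations. -/
theorem alpha_balance_equations
    (L : ℕ) (hL : 1 ≤ L) (S T : ℕ → ℝ)
    (hS0 : 0 < S 1) (hSmono : ∀ l : ℕ, 1 ≤ l → l < L → S l < S (l + 1)) (hSL : S L < 1)
    (hT0 : 0 < T 1) (hTmono : ∀ l : ℕ, 1 ≤ l → l < L → T l < T (l + 1)) (hTL : T L < 1)
    (hTS1 : T 1 = S 1) (hTS : ∀ l : ℕ, 2 ≤ l → l ≤ L → S l < T l) :
    (∀ l : ℕ, 1 ≤ l → l ≤ L →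
      S l * alphaC L S T l + (1 - S l) * alphaC L S T (-(l : ℤ)) = 1) ∧
    (∀ l : ℕ, l < L →
      T (l + 1) * alphaC L S T ((l : ℤ) + 1)
        + (1 - T (l + 1)) * alphaC L S T (-((l : ℤ) + 1))
      = T (l + 1) * alphaC L S T l + (1 - T (l + 1)) * alphaC L S T (-(l : ℤ))) :=
  alpha_balance_equations_general L S T hS0 hSmono hSL hTS1 hTS
end

section
/- Let G ≥ 1, T ∈ (0,1), μ_max > 0. Define f : {-1,0,1}^G → ℝ by: f(y) = μ_max · T^{G−C} if W = 0 and C > 0, and f(y) = 0 otherwise, where C = #{i : y_i = 1} and W = #{i : y_i = -1}. Then for a worker with confidences p_1,...,p_G ∈ (0,1] all strictly less than T (unknowledgeable worker), the expected payment E(A) = μ_max T^{G} ∏_{i∈A}(p_i/T) for nonempty A and E(∅) = 0 is uniquely maximized over subsets A ⊆ {1,...,G} by the singleton {argmax_i p_i} (assuming the maximum confidence is unique). -/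
/-- part of Proposition 3: an unknowledgeable worker (all confidences below T)
is uniquely incentivized to answer only her single most-confident question. -/
theorem unknowledgeable_answers_one_question
    (G : ℕ) (hG : 1 ≤ G) (T μmax : ℝ) (hT0 : 0 < T) (hT1 : T < 1) (hμ : 0 < μmax)
    (p : Fin G → ℝ) (hp0 : ∀ i, 0 < p i) (hp1 : ∀ i, p i ≤ 1) (hpT : ∀ i, p i < T)
    (i0 : Fin G) (hi0 : ∀ j, j ≠ i0 → p j < p i0)
    (E : Finset (Fin G) → ℝ)
    (hEempty : E ∅ = 0)
    (hE : ∀ A : Finset (Fin G), A ≠ ∅ → E A = μmax * T ^ G * ∏ i ∈ A, p i / T) :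
    ∀ A : Finset (Fin G), A ≠ {i0} → E A < E {i0} := by
  intro A hA
  have hEi0 : E {i0} = μmax * T ^ G * (p i0 / T) := by
    rw [hE {i0} (by simp)]; simp
  have hpos : 0 < μmax * T ^ G := by positivity
  by_cases hAe : A = ∅
  · subst hAe
    rw [hEempty, hEi0]
    have : 0 < p i0 / T := div_pos (hp0 i0) hT0
    nlinarith
  · obtain ⟨j, hj, hji⟩ : ∃ j ∈ A, j ≠ i0 := by
      by_contra h
      push_neg at h
      apply hA
      apply Finset.eq_singleton_iff_nonempty_unique_mem.2
      exact ⟨Finset.nonempty_iff_ne_empty.2 hAe, h⟩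
    rw [hE A hAe, hEi0]
    have hfac : ∀ i ∈ A, p i / T ≤ 1 := fun i _ => by
      rw [div_le_one hT0]; exact le_of_lt (hpT i)
    have hprod : (∏ i ∈ A, p i / T) ≤ p j / T := by
      rw [← Finset.prod_erase_mul A _ hj]
      have h1 : (∏ i ∈ A.erase j, p i / T) ≤ 1 :=
        Finset.prod_le_one (fun i _ => le_of_lt (div_pos (hp0 i) hT0))
          (fun i hi => hfac i (Finset.mem_of_mem_erase hi))
      have h2 : 0 < p j / T := div_pos (hp0 j) hT0
      nlinarith
    have hlt : p j / T < p i0 / T := (div_lt_div_iff_of_pos_right hT0).mpr (hi0 j hji)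
    calc μmax * T ^ G * ∏ i ∈ A, p i / T ≤ μmax * T ^ G * (p j / T) := by
          exact mul_le_mul_of_nonneg_left hprod (le_of_lt hpos)
      _ < μmax * T ^ G * (p i0 / T) := by
          exact mul_lt_mul_of_pos_left hlt hpos
end

section
/- Let T ∈ (0,1), G ≥ 1, μ_max > 0. Suppose f : {-1,0,1}^G → [0, μ_max] satisfies strong no-free-lunch (f(y) = 0 whenever no coordinate equals +1) and the restricted coordinatewise identity: for every coordinate i and every assignment (y_1,...,y_{i-1},y_{i+1},...,y_G) ≠ (0,...,0) of the other coordinates, T·f(...,1,...) + (1−T)·f(...,−1,...) = f(...,0,...). Then f(y) = μ_max · T^{G−C(y)} · 1{W(y) = 0 and C(y) > 0}, where C(y) = #{i : y_i = 1}, W(y) = #{i : y_i = −1}, provided the maximum of f equals μ_max. -/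
/-- uniqueness part of Proposition 3, G = N: strong no-free-lunch and the
restricted coordinatewise identity pin down the mechanism
f(y) = μ_max·T^{G−C}·1{W = 0 ∧ C > 0}. -/
theorem strong_nfl_mechanism_unique
    (G : ℕ) (hG : 1 ≤ G) (T μmax : ℝ) (hT0 : 0 < T) (hT1 : T < 1) (hμ : 0 < μmax)
    (f : (Fin G → ℤ) → ℝ)
    (hnonneg : ∀ y : Fin G → ℤ, (∀ j, y j = -1 ∨ y j = 0 ∨ y j = 1) → 0 ≤ f y)
    (hbound : ∀ y : Fin G → ℤ, (∀ j, y j = -1 ∨ y j = 0 ∨ y j = 1) → f y ≤ μmax)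
    (hattain : ∃ y : Fin G → ℤ, (∀ j, y j = -1 ∨ y j = 0 ∨ y j = 1) ∧ f y = μmax)
    (hsnfl : ∀ y : Fin G → ℤ, (∀ j, y j = -1 ∨ y j = 0 ∨ y j = 1) →
        (∀ j, y j ≠ 1) → f y = 0)
    (hid : ∀ y : Fin G → ℤ, (∀ j, y j = -1 ∨ y j = 0 ∨ y j = 1) → ∀ i,
        (∃ j, j ≠ i ∧ y j ≠ 0) →
        T * f (Function.update y i 1) + (1 - T) * f (Function.update y i (-1))
          = f (Function.update y i 0)) :
    ∀ y : Fin G → ℤ, (∀ j, y j = -1 ∨ y j = 0 ∨ y j = 1) →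
      f y = if (∀ j, y j ≠ -1) ∧ (∃ j, y j = 1)
        then μmax * T ^ (G - (Finset.univ.filter (fun i => y i = 1)).card)
        else 0 := by
  -- validity of updates
  have hval : ∀ (y : Fin G → ℤ), (∀ j, y j = -1 ∨ y j = 0 ∨ y j = 1) →
      ∀ (k : Fin G) (c : ℤ), (c = -1 ∨ c = 0 ∨ c = 1) →
      ∀ j, Function.update y k c j = -1 ∨ Function.update y k c j = 0 ∨
        Function.update y k c j = 1 := by
    intro y hy k c hc j
    rcases eq_or_ne j k with rfl | h
    · simpa using hc
    · simpa [Function.update_apply, h] using hy j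
  have hfilt1 : ∀ (y : Fin G → ℤ) (k : Fin G) (c : ℤ), c ≠ 1 →
      (Finset.univ.filter (fun i => Function.update y k c i = 1))
        = (Finset.univ.filter (fun i => y i = 1)).erase k := by
    intro y k c hc
    ext i
    rcases eq_or_ne i k with rfl | h
    · simp [hc]
    · simp [Function.update_apply, h]
  have hfilt0 : ∀ (y : Fin G → ℤ) (k : Fin G) (c : ℤ), c ≠ 0 →
      (Finset.univ.filter (fun i => Function.update y k c i = 0))
        = (Finset.univ.filter (fun i => y i = 0)).erase k := by
    intro y k c hc
    ext i
    rcases eq_or_ne i k with rfl | h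
    · simp [hc]
    · simp [Function.update_apply, h]
  have hupd1 : ∀ (y : Fin G → ℤ) (k : Fin G), y k = 1 → Function.update y k 1 = y := by
    intro y k hk
    conv_lhs => rw [← hk]
    exact Function.update_eq_self k y
  -- Lemma A: any outcome with a -1 gets 0
  have lemA : ∀ n (y : Fin G → ℤ), (∀ j, y j = -1 ∨ y j = 0 ∨ y j = 1) →
      (Finset.univ.filter (fun i => y i = 1)).card = n → (∃ i, y i = -1) → f y = 0 := by
    intro n
    induction n with
    | zero =>
      intro y hy hcard _
      apply hsnfl y hy
      intro j hj
      have : j ∈ Finset.univ.filter (fun i => y i = 1) := by simp [hj]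
      rw [Finset.card_eq_zero.mp hcard] at this
      simp at this
    | succ n ih =>
      intro y hy hcard ⟨i, hi⟩
      have hne : (Finset.univ.filter (fun i => y i = 1)).Nonempty := by
        rw [← Finset.card_pos, hcard]; omega
      obtain ⟨k, hk⟩ := hne
      have hk1 : y k = 1 := (Finset.mem_filter.mp hk).2
      have hik : i ≠ k := by intro h; rw [h, hk1] at hi; norm_num at hi
      have hmem : k ∈ Finset.univ.filter (fun i => y i = 1) := hk
      have hcard' : ∀ c : ℤ, c ≠ 1 →
          (Finset.univ.filter (fun i => Function.update y k c i = 1)).card = n := by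
        intro c hc
        rw [hfilt1 y k c hc, Finset.card_erase_of_mem hmem, hcard]
        omega
      have hiupd : ∀ c : ℤ, Function.update y k c i = -1 := by
        intro c; rw [Function.update_apply]; simp [hik, hi]
      have h0 : f (Function.update y k 0) = 0 :=
        ih _ (hval y hy k 0 (by norm_num)) (hcard' 0 (by norm_num)) ⟨i, hiupd 0⟩
      have hm : f (Function.update y k (-1)) = 0 :=
        ih _ (hval y hy k (-1) (by norm_num)) (hcard' (-1) (by norm_num)) ⟨i, hiupd (-1)⟩
      have hident := hid y hy k ⟨i, hik, by rw [hi]; norm_num⟩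
      rw [hupd1 y k hk1, h0, hm] at hident
      have : T * f y = 0 := by linarith
      exact (mul_eq_zero.mp this).resolve_left (ne_of_gt hT0)
  -- Lemma B: no -1's and some +1: f y = T^{#zeros} * f(ones)
  have lemB : ∀ m (y : Fin G → ℤ), (∀ j, y j = -1 ∨ y j = 0 ∨ y j = 1) →
      (∀ j, y j ≠ -1) → (∃ j, y j = 1) →
      (Finset.univ.filter (fun i => y i = 0)).card = m →
      f y = T ^ m * f (fun _ => 1) := by
    intro m
    induction m with
    | zero =>
      intro y hy hno hsome hcard
      have : y = fun _ => 1 := by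
        funext j
        rcases hy j with h | h | h
        · exact absurd h (hno j)
        · exfalso
          have : j ∈ Finset.univ.filter (fun i => y i = 0) := by simp [h]
          rw [Finset.card_eq_zero.mp hcard] at this
          simp at this
        · exact h
      rw [this, pow_zero, one_mul]
    | succ m ih =>
      intro y hy hno hsome hcard
      have hne : (Finset.univ.filter (fun i => y i = 0)).Nonempty := by
        rw [← Finset.card_pos, hcard]; omega
      obtain ⟨i, hi⟩ := hne
      have hi0 : y i = 0 := (Finset.mem_filter.mp hi).2
      obtain ⟨j, hj⟩ := hsome
      have hji : j ≠ i := by intro h; rw [h, hi0] at hj; norm_num at hj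
      have hident := hid y hy i ⟨j, hji, by rw [hj]; norm_num⟩
      have hupd0 : Function.update y i 0 = y := by
        conv_lhs => rw [← hi0]
        exact Function.update_eq_self i y
      have hm : f (Function.update y i (-1)) = 0 := by
        apply lemA _ _ (hval y hy i (-1) (by norm_num)) rfl
        exact ⟨i, by simp⟩
      have hcard1 : (Finset.univ.filter (fun k => Function.update y i 1 k = 0)).card = m := by
        rw [hfilt0 y i 1 (by norm_num), Finset.card_erase_of_mem hi, hcard]
        omega
      have hval1 := hval y hy i 1 (by norm_num)
      have hno1 : ∀ k, Function.update y i 1 k ≠ -1 := by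
        intro k
        rcases eq_or_ne k i with rfl | h
        · simp
        · simpa [Function.update_apply, h] using hno k
      have hsome1 : ∃ k, Function.update y i 1 k = 1 := ⟨i, by simp⟩
      have hIH := ih _ hval1 hno1 hsome1 hcard1
      rw [hupd0, hm, hIH] at hident
      rw [← hident]; ring
  -- Lemma C: f(ones) = μmax
  have honesval : ∀ j : Fin G, (1 : ℤ) = -1 ∨ (1 : ℤ) = 0 ∨ (1 : ℤ) = 1 := by norm_num
  have lemC : f (fun _ => 1) = μmax := by
    obtain ⟨y, hy, hfy⟩ := hattain
    have hno : ∀ j, y j ≠ -1 := by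
      intro j hj
      have := lemA _ y hy rfl ⟨j, hj⟩
      rw [hfy] at this; linarith
    have hsome : ∃ j, y j = 1 := by
      by_contra h
      push_neg at h
      have := hsnfl y hy fun j => h j
      rw [hfy] at this; linarith
    have hB := lemB _ y hy hno hsome rfl
    rw [hfy] at hB
    have h1 : f (fun _ => 1) ≤ μmax := hbound _ honesval
    have h0 : 0 ≤ f (fun _ => 1) := hnonneg _ honesval
    have hTle : T ^ (Finset.univ.filter (fun i => y i = 0)).card ≤ 1 :=
      pow_le_one₀ (le_of_lt hT0) (le_of_lt hT1)
    nlinarith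
  -- conclusion
  intro y hy
  split_ifs with h
  · obtain ⟨hno, hsome⟩ := h
    have hB := lemB _ y hy hno hsome rfl
    rw [lemC] at hB
    have hsum : (Finset.univ.filter (fun i => y i = 0)).card
        + (Finset.univ.filter (fun i => y i = 1)).card = G := by
      rw [← Finset.card_union_of_disjoint]
      · have : (Finset.univ.filter (fun i => y i = 0))
            ∪ (Finset.univ.filter (fun i => y i = 1)) = Finset.univ := by
          ext i
          simp only [Finset.mem_union, Finset.mem_filter, Finset.mem_univ, true_and]
          rcases hy i with h | h | h
          · exact absurd h (hno i)
          · tauto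
          · tauto
        rw [this, Finset.card_univ, Fintype.card_fin]
      · rw [Finset.disjoint_left]
        intro i h0 h1
        simp only [Finset.mem_filter] at h0 h1
        have := h1.2
        rw [h0.2] at this
        norm_num at this
    have hle : (Finset.univ.filter (fun i => y i = 1)).card ≤ G := by omega
    have : (Finset.univ.filter (fun i => y i = 0)).card
        = G - (Finset.univ.filter (fun i => y i = 1)).card := by omega
    rw [hB, this, mul_comm]
  · rw [not_and_or] at h
    rcases h with h | h
    · push_neg at h
      obtain ⟨j, hj⟩ := h
      exact lemA _ y hy rfl ⟨j, hj⟩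
    · push_neg at h
      exact hsnfl y hy h
end

section
/- Let T_1 < T_2 < ... < T_L be the boundary thresholds and S_1,...,S_L the skip-comparison thresholds of an incentive-compatible confidence-based mechanism with L ≥ 2 levels, i.e., a nonnegative payment f : {-L,...,L}^G → ℝ satisfying the identities of Lemma 6 together with the strict ordering f(l,0,...,0) > f(−l,0,...,0) for all l ∈ {1,...,L}. Then necessarily T_l > S_l for all l ∈ {2,...,L}. -/
/-!
Fix all coordinates but the first at `0` and write `g k` for the payment when the first report
is `k`, and `D m = g m - g (-m)` for the gap between a correct and an incorrect report at level
`m`. Subtracting the `T_m`-identity from the `S_m`-identity, and using that both the `S_m`- and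
the `S_{m-1}`-identity equal `g 0`, gives `(S_m - T_m) D_m = (S_{m-1} - T_m) D_{m-1}`. All gaps
are positive, so `S_m < T_m` as soon as `S_{m-1} < T_m`; since `S_1 = T_1` and `T` is strictly
increasing, induction on `m` gives `S_m < T_m` for every `m ≥ 2`.
-/

theorem gap_recursion (g : ℤ → ℝ) (m : ℤ) {s s' t : ℝ}
    (hT : t * g m + (1 - t) * g (-m) = t * g (m - 1) + (1 - t) * g (-(m - 1)))
    (hS : s * g m + (1 - s) * g (-m) = g 0)
    (hS' : s' * g (m - 1) + (1 - s') * g (-(m - 1)) = g 0) :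
    (s - t) * (g m - g (-m)) = (s' - t) * (g (m - 1) - g (-(m - 1))) := by
  linarith

theorem lt_of_mul_gap_eq {s s' t d d' : ℝ} (hd : 0 < d) (hd' : 0 < d') (hs' : s' < t)
    (h : (s - t) * d = (s' - t) * d') : s < t := by
  have hneg : (s - t) * d < 0 := h ▸ mul_neg_of_neg_of_pos (sub_neg.2 hs') hd'
  exact sub_neg.1 (neg_of_mul_neg_left hneg hd.le)

theorem lt_of_gap_recursion {L : ℕ} {S T D : ℕ → ℝ} (hTS1 : T 1 = S 1)
    (hTmono : ∀ l : ℕ, 1 ≤ l → l < L → T l < T (l + 1))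
    (hD : ∀ m : ℕ, 1 ≤ m → m ≤ L → 0 < D m)
    (hrec : ∀ m : ℕ, 1 ≤ m → m + 1 ≤ L →
      (S (m + 1) - T (m + 1)) * D (m + 1) = (S m - T (m + 1)) * D m) :
    ∀ l : ℕ, 2 ≤ l → l ≤ L → S l < T l := by
  have step : ∀ m : ℕ, 1 ≤ m → m + 1 ≤ L → S m ≤ T m → S (m + 1) < T (m + 1) :=
    fun m h1 h2 hm => lt_of_mul_gap_eq (hD _ (by omega) h2) (hD m h1 (by omega))
      (hm.trans_lt (hTmono m h1 h2)) (hrec m h1 h2)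
  intro l hl
  induction l, hl using Nat.le_induction with
  | base => exact fun h2L => step 1 le_rfl h2L hTS1.ge
  | succ n hn ih => exact fun hnL => step n (by omega) hnL (ih (by omega)).le

theorem thresholds_T_gt_S_general
    (G L : ℕ) (hG : 0 < G)
    (S T : ℕ → ℝ)
    (hTmono : ∀ l : ℕ, 1 ≤ l → l < L → T l < T (l + 1))
    (hTS1 : T 1 = S 1)
    (f : (Fin G → ℤ) → ℝ)
    (hidT : ∀ y : Fin G → ℤ, (∀ j, -(L : ℤ) ≤ y j ∧ y j ≤ L) → ∀ i : Fin G,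
      ∀ m : ℕ, 1 ≤ m → m ≤ L →
      T m * f (Function.update y i (m : ℤ))
          + (1 - T m) * f (Function.update y i (-(m : ℤ)))
        = T m * f (Function.update y i ((m : ℤ) - 1))
          + (1 - T m) * f (Function.update y i (-((m : ℤ) - 1))))
    (hidS : ∀ y : Fin G → ℤ, (∀ j, -(L : ℤ) ≤ y j ∧ y j ≤ L) → ∀ i : Fin G,
      ∀ m : ℕ, 1 ≤ m → m ≤ L →
      S m * f (Function.update y i (m : ℤ))
          + (1 - S m) * f (Function.update y i (-(m : ℤ)))
        = f (Function.update y i 0))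
    (hstrict : ∀ l : ℕ, 1 ≤ l → l ≤ L →
      f (Function.update (fun _ => (0 : ℤ)) (⟨0, hG⟩ : Fin G) (-(l : ℤ)))
        < f (Function.update (fun _ => (0 : ℤ)) (⟨0, hG⟩ : Fin G) (l : ℤ))) :
    ∀ l : ℕ, 2 ≤ l → l ≤ L → S l < T l := by
  have hzero : ∀ j : Fin G, -(L : ℤ) ≤ (fun _ => (0 : ℤ)) j ∧ (fun _ => (0 : ℤ)) j ≤ L :=
    fun _ => ⟨by simp, by simp⟩
  set g : ℤ → ℝ := fun k => f (Function.update (fun _ => (0 : ℤ)) ⟨0, hG⟩ k)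
  refine lt_of_gap_recursion (D := fun m => g m - g (-m)) hTS1 hTmono
    (fun m h1 h2 => sub_pos.2 (hstrict m h1 h2)) fun m h1 h2 => ?_
  have hT := hidT _ hzero ⟨0, hG⟩ (m + 1) (by omega) h2
  have hS := hidS _ hzero ⟨0, hG⟩ (m + 1) (by omega) h2
  have hS' := hidS _ hzero ⟨0, hG⟩ m h1 (by omega)
  have hcast : ((m + 1 : ℕ) : ℤ) - 1 = m := by push_cast; ring
  simpa only [hcast] using gap_recursion g ((m + 1 : ℕ) : ℤ) hT hS (by rwa [hcast])

/-- Proposition 1 of Appendix A.5: any incentive-compatible confidence-based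
mechanism (Lemma 6 identities plus strict correct-vs-incorrect ordering) forces T_l > S_l
for all l ≥ 2. -/
theorem thresholds_T_gt_S
    (G L : ℕ) (hG : 0 < G) (hL : 2 ≤ L)
    (S T : ℕ → ℝ)
    (hT0 : 0 < T 1) (hTmono : ∀ l : ℕ, 1 ≤ l → l < L → T l < T (l + 1)) (hTL : T L < 1)
    (hS0 : 0 < S 1) (hSmono : ∀ l : ℕ, 1 ≤ l → l < L → S l < S (l + 1)) (hSL : S L < 1)
    (hTS1 : T 1 = S 1)
    (f : (Fin G → ℤ) → ℝ)
    (hnonneg : ∀ y : Fin G → ℤ, (∀ j, -(L : ℤ) ≤ y j ∧ y j ≤ L) → 0 ≤ f y)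
    (hidT : ∀ y : Fin G → ℤ, (∀ j, -(L : ℤ) ≤ y j ∧ y j ≤ L) → ∀ i : Fin G,
      ∀ m : ℕ, 1 ≤ m → m ≤ L →
      T m * f (Function.update y i (m : ℤ))
          + (1 - T m) * f (Function.update y i (-(m : ℤ)))
        = T m * f (Function.update y i ((m : ℤ) - 1))
          + (1 - T m) * f (Function.update y i (-((m : ℤ) - 1))))
    (hidS : ∀ y : Fin G → ℤ, (∀ j, -(L : ℤ) ≤ y j ∧ y j ≤ L) → ∀ i : Fin G,
      ∀ m : ℕ, 1 ≤ m → m ≤ L →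
      S m * f (Function.update y i (m : ℤ))
          + (1 - S m) * f (Function.update y i (-(m : ℤ)))
        = f (Function.update y i 0))
    (hstrict : ∀ l : ℕ, 1 ≤ l → l ≤ L →
      f (Function.update (fun _ => (0 : ℤ)) (⟨0, hG⟩ : Fin G) (-(l : ℤ)))
        < f (Function.update (fun _ => (0 : ℤ)) (⟨0, hG⟩ : Fin G) (l : ℤ))) :
    ∀ l : ℕ, 2 ≤ l → l ≤ L → S l < T l :=
  thresholds_T_gt_S_general G L hG S T hTmono hTS1 f hidT hidS hstrict
end
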